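/- arXiv:2603.11942 — 3 statements merged into one kernel-verified Lean document; each statement's English description precedes it below -/
import Mathlib

section
/- (Caro–Wei bound) For any finite simple graph G = (V, E), the independence number α(G) satisfies α(G) ≥ Σ_{v∈V} 1/(1 + deg(v)). -/
/-!
Greedy argument: pick a vertex `v` of minimum degree, put it into the independent set and delete
its closed neighbourhood `N`. Every vertex of `N` has degree at least `deg v = #N - 1`, so the
vertices of `N` contribute at most `1` to the Caro–Wei sum, while deleting `N` can only raise the
contributions of the remaining vertices. Induction on the vertex set finishes the proof.
-/

open Finset

lemma Finset.sum_one_div_one_add_le_one {ι : Type*} {s : Finset ι} {f : ι → ℝ}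
    (hf : ∀ i ∈ s, (#s : ℝ) ≤ 1 + f i) : ∑ i ∈ s, 1 / (1 + f i) ≤ 1 := by
  rcases s.eq_empty_or_nonempty with rfl | hs
  · simp
  have hpos : (0 : ℝ) < #s := by exact_mod_cast hs.card_pos
  calc ∑ i ∈ s, 1 / (1 + f i) ≤ ∑ _i ∈ s, 1 / (#s : ℝ) :=
        sum_le_sum fun i hi => one_div_le_one_div_of_le hpos (hf i hi)
    _ = 1 := by rw [sum_const, nsmul_eq_mul, mul_one_div_cancel hpos.ne']

namespace SimpleGraph

variable {V : Type*}

lemma IsIndepSet.insert_of_forall_not_adj {G : SimpleGraph V} {s : Set V} {v : V}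
    (hs : G.IsIndepSet s) (hv : ∀ u ∈ s, ¬ G.Adj v u) : G.IsIndepSet (insert v s) :=
  hs.insert fun u hu _ => ⟨hv u hu, fun h => hv u hu h.symm⟩

variable (G : SimpleGraph V) [DecidableRel G.Adj]

/-- The degree of `v` in the subgraph induced on `s`, when `v ∈ s`. -/
def degreeOn (s : Finset V) (v : V) : ℕ := #{w ∈ s | G.Adj v w}

variable {G}

lemma degreeOn_mono {s t : Finset V} (h : s ⊆ t) (v : V) : G.degreeOn s v ≤ G.degreeOn t v :=
  card_le_card (filter_subset_filter _ h)

lemma degreeOn_univ [Fintype V] (v : V) : G.degreeOn univ v = G.degree v := by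
  rw [degreeOn, degree, neighborFinset_eq_filter]

lemma card_insert_filter_adj [DecidableEq V] (s : Finset V) (v : V) :
    #(insert v {w ∈ s | G.Adj v w}) = G.degreeOn s v + 1 :=
  card_insert_of_notMem (by simp)

theorem exists_isIndepSet_subset_sum_le [DecidableEq V] (s : Finset V) :
    ∃ t ⊆ s, G.IsIndepSet t ∧ ∑ v ∈ s, (1 : ℝ) / (1 + G.degreeOn s v) ≤ #t := by
  induction s using Finset.strongInduction with
  | H s ih =>
  rcases s.eq_empty_or_nonempty with rfl | hs
  · exact ⟨∅, subset_rfl, by simp, by simp⟩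
  obtain ⟨v, hv, hmin⟩ := s.exists_min_image (G.degreeOn s) hs
  set N := insert v {w ∈ s | G.Adj v w}
  have hNs : N ⊆ s := insert_subset hv (filter_subset _ _)
  obtain ⟨t, hts, ht, hsum⟩ := ih (s \ N) (sdiff_ssubset hNs (insert_nonempty _ _))
  have hvt : v ∉ t := fun h => (mem_sdiff.1 (hts h)).2 (mem_insert_self _ _)
  have hv_not_adj : ∀ u ∈ (t : Set V), ¬ G.Adj v u := fun u hu hvu =>
    (mem_sdiff.1 (hts hu)).2 (mem_insert_of_mem (mem_filter.2 ⟨(mem_sdiff.1 (hts hu)).1, hvu⟩))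
  have hN : ∑ u ∈ N, (1 : ℝ) / (1 + G.degreeOn s u) ≤ 1 :=
    sum_one_div_one_add_le_one fun u hu => by
      rw [card_insert_filter_adj, Nat.cast_succ, add_comm]
      exact add_le_add_right (by exact_mod_cast hmin u (hNs hu)) 1
  have hrest : ∑ u ∈ s \ N, (1 : ℝ) / (1 + G.degreeOn s u)
      ≤ ∑ u ∈ s \ N, (1 : ℝ) / (1 + G.degreeOn (s \ N) u) :=
    sum_le_sum fun u _ => one_div_le_one_div_of_le (by positivity)
      (by gcongr; exact degreeOn_mono sdiff_subset u)
  refine ⟨insert v t, insert_subset hv (hts.trans sdiff_subset), ?_, ?_⟩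
  · rw [coe_insert]
    exact ht.insert_of_forall_not_adj hv_not_adj
  · calc ∑ u ∈ s, (1 : ℝ) / (1 + G.degreeOn s u)
          = ∑ u ∈ s \ N, (1 : ℝ) / (1 + G.degreeOn s u)
            + ∑ u ∈ N, (1 : ℝ) / (1 + G.degreeOn s u) := (sum_sdiff hNs).symm
        _ ≤ #t + 1 := add_le_add (hrest.trans hsum) hN
        _ = #(insert v t) := by rw [card_insert_of_notMem hvt, Nat.cast_succ]

end SimpleGraph

/-- Caro–Wei bound: every finite simple graph `G` has an
independent set of size at least `Σ_v 1/(1 + deg v)`; equivalently the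
independence number `α(G)` is at least this sum. -/
theorem caro_wei {V : Type*} [Fintype V] (G : SimpleGraph V) [DecidableRel G.Adj] :
    ∃ s : Finset V, (↑s : Set V).Pairwise (fun a b => ¬ G.Adj a b) ∧
      ∑ v : V, (1 : ℝ) / (1 + G.degree v) ≤ s.card := by
  classical
  obtain ⟨t, -, ht, hsum⟩ := G.exists_isIndepSet_subset_sum_le univ
  exact ⟨t, ht, by simpa only [SimpleGraph.degreeOn_univ] using hsum⟩
end

section
/- Let S be a finite index set, X_k (k ∈ S) be {0,1}-valued random variables, and E_S ⊆ S × S a symmetric set of pairs (a 'conflict' graph on S). Let K be the independence number of the random induced subgraph on the active set {k : X_k = 1}, K' = Σ_{k∈S} X_k the total number of active vertices, and K^p = (1/2)·Σ_{(k₁,k₂)∈E_S, k₁≠k₂} E[X_{k₁} X_{k₂}] the expected number of conflicting active pairs. Then E[K'] / (1 + 2 E[K^p]/E[K']) ≤ E[K] ≤ E[K'], i.e. E[K] ≥ E[K']² / (E[K'] + 2 E[K^p]). -/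
/-!
Fix an outcome and let `A` be its active set. The Caro–Wei theorem gives an independent subset
of `A` of size at least `∑_{v ∈ A} 1 / (1 + d_A v)`, and Cauchy–Schwarz (Titu's lemma) turns this
into `K' ^ 2 ≤ K * (K' + P)`, where `P = ∑_{v ∈ A} d_A v` counts the ordered active conflicting
pairs. Since `(a, c) ↦ a ^ 2 / c` is jointly convex, this survives taking expectations:
`(E K') ^ 2 ≤ E K * (E K' + E P)` with `E P = 2 Kᵖ`. That Jensen step is proved by the
discriminant argument behind Cauchy–Schwarz. The upper bound is just `K ≤ K'`.
-/

open MeasureTheory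

/-- The independence number of the subgraph of `G` induced on the active set
`{k | X k ω = 1}`: the largest size of a set of pairwise non-adjacent active
vertices. -/
noncomputable def activeIndepNum {S Ω : Type*} [Fintype S]
    (G : SimpleGraph S) (X : S → Ω → ℝ) (ω : Ω) : ℕ :=
  sSup {n | ∃ s : Finset S, s.card = n ∧ (∀ k ∈ s, X k ω = 1) ∧
    (↑s : Set S).Pairwise (fun k₁ k₂ => ¬ G.Adj k₁ k₂)}

open Finset

namespace SimpleGraph

variable {V : Type*} (G : SimpleGraph V) [DecidableRel G.Adj]

noncomputable def caroWeiBound (s : Finset V) : ℝ :=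
  ∑ v ∈ s, ((1 : ℝ) + #{w ∈ s | G.Adj v w})⁻¹

lemma sq_card_le_caroWeiBound_mul (s : Finset V) :
    (#s : ℝ) ^ 2 ≤ G.caroWeiBound s * (#s + ∑ v ∈ s, (#{w ∈ s | G.Adj v w} : ℝ)) := by
  have h := sum_sq_le_sum_mul_sum_of_sq_le_mul s (r := 1)
    (f := fun v => ((1 : ℝ) + #{w ∈ s | G.Adj v w})⁻¹) (g := fun v => 1 + #{w ∈ s | G.Adj v w})
    (fun v _ => by positivity) (fun v _ => by positivity)
    (fun v _ => by rw [Pi.one_apply, one_pow, inv_mul_cancel₀ (by positivity)])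
  simpa [caroWeiBound, sum_add_distrib] using h

variable {G} [DecidableEq V]

lemma caroWeiBound_le_one_add_sdiff {s : Finset V} {v : V} (hv : v ∈ s)
    (hmin : ∀ u ∈ s, #{w ∈ s | G.Adj v w} ≤ #{w ∈ s | G.Adj u w}) :
    G.caroWeiBound s ≤ 1 + G.caroWeiBound (s \ insert v {w ∈ s | G.Adj v w}) := by
  set N := insert v {w ∈ s | G.Adj v w}
  have hNs : N ⊆ s := insert_subset hv (filter_subset _ _)
  -- each vertex of the closed neighbourhood `N` has degree `≥ deg v`, and `#N ≤ 1 + deg v`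
  have hN : ∑ u ∈ N, ((1 : ℝ) + #{w ∈ s | G.Adj u w})⁻¹ ≤ 1 := by
    calc ∑ u ∈ N, ((1 : ℝ) + #{w ∈ s | G.Adj u w})⁻¹
        ≤ #N • ((1 : ℝ) + #{w ∈ s | G.Adj v w})⁻¹ :=
          sum_le_card_nsmul _ _ _ fun u hu => inv_anti₀ (by positivity)
            (by exact_mod_cast Nat.add_le_add_left (hmin u (hNs hu)) 1)
      _ ≤ 1 := by
          rw [nsmul_eq_mul, ← div_eq_mul_inv, div_le_one (by positivity), add_comm]
          exact_mod_cast card_insert_le _ _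
  have hrest : ∑ u ∈ s \ N, ((1 : ℝ) + #{w ∈ s | G.Adj u w})⁻¹ ≤ G.caroWeiBound (s \ N) :=
    sum_le_sum fun u _ => by gcongr; exact sdiff_subset
  rw [caroWeiBound, ← sum_sdiff hNs]
  linarith

/-- The Caro–Wei theorem, for the subgraph induced on `s`. -/
theorem exists_isIndepSet_subset_caroWeiBound_le (s : Finset V) :
    ∃ t ⊆ s, G.IsIndepSet t ∧ G.caroWeiBound s ≤ #t := by
  induction s using Finset.strongInduction with
  | _ s ih =>
    rcases s.eq_empty_or_nonempty with rfl | hne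
    · exact ⟨∅, subset_rfl, by simp, by simp [caroWeiBound]⟩
    obtain ⟨v, hv, hmin⟩ := s.exists_min_image (fun u => #{w ∈ s | G.Adj u w}) hne
    set N := insert v {w ∈ s | G.Adj v w}
    obtain ⟨t, hts, ht, hbound⟩ :=
      ih (s \ N) (sdiff_ssubset (insert_subset hv (filter_subset _ _)) ⟨v, mem_insert_self _ _⟩)
    have hvt : v ∉ t := fun h => (mem_sdiff.1 (hts h)).2 (mem_insert_self _ _)
    refine ⟨insert v t, insert_subset hv (hts.trans sdiff_subset), ?_, ?_⟩
    · rw [coe_insert]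
      refine ht.insert fun u hu _ => ?_
      have hvu : ¬G.Adj v u := fun hvu => (mem_sdiff.1 (hts hu)).2 <|
        mem_insert_of_mem (mem_filter.2 ⟨(mem_sdiff.1 (hts hu)).1, hvu⟩)
      exact ⟨hvu, fun huv => hvu huv.symm⟩
    · rw [card_insert_of_notMem hvt, Nat.cast_succ]
      linarith [caroWeiBound_le_one_add_sdiff hv hmin]

end SimpleGraph

section ZeroOne

variable {S : Type*} {x : S → ℝ}

lemma sum_mul_eq_sum_filter_of_zero_or_one (hx : ∀ k, x k = 0 ∨ x k = 1) (s : Finset S)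
    (f : S → ℝ) : ∑ k ∈ s, x k * f k = ∑ k ∈ s with x k = 1, f k := by
  rw [sum_filter]
  refine sum_congr rfl fun k _ => ?_
  rcases hx k with h | h <;> simp [h]

lemma sum_eq_card_filter_of_zero_or_one (hx : ∀ k, x k = 0 ∨ x k = 1) (s : Finset S) :
    ∑ k ∈ s, x k = #{k ∈ s | x k = 1} := by
  simpa using sum_mul_eq_sum_filter_of_zero_or_one hx s 1

lemma sum_adj_mul_eq_of_zero_or_one [Fintype S] (G : SimpleGraph S) [DecidableRel G.Adj]
    (hx : ∀ k, x k = 0 ∨ x k = 1) :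
    ∑ k₁, ∑ k₂ ∈ univ.filter (G.Adj k₁), x k₁ * x k₂
      = ∑ v ∈ {k | x k = 1}, (#{w ∈ {k | x k = 1} | G.Adj v w} : ℝ) := by
  simp_rw [← mul_sum, sum_mul_eq_sum_filter_of_zero_or_one hx,
    sum_eq_card_filter_of_zero_or_one hx, filter_filter, and_comm]

end ZeroOne

section ActiveIndepNum

variable {S Ω : Type*} [Fintype S] (G : SimpleGraph S) (X : S → Ω → ℝ)

lemma activeIndepNum_le_card (ω : Ω) : activeIndepNum G X ω ≤ Fintype.card S :=
  csSup_le' fun _ ⟨s, hs, _⟩ => hs ▸ card_le_univ s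

lemma card_le_activeIndepNum {ω : Ω} {t : Finset S} (ht : ∀ k ∈ t, X k ω = 1)
    (hG : G.IsIndepSet t) : #t ≤ activeIndepNum G X ω :=
  le_csSup ⟨Fintype.card S, fun _ ⟨s, hs, _⟩ => hs ▸ card_le_univ s⟩ ⟨t, rfl, ht, hG⟩

lemma activeIndepNum_le_sum {ω : Ω} (hX : ∀ k, X k ω = 0 ∨ X k ω = 1) :
    (activeIndepNum G X ω : ℝ) ≤ ∑ k, X k ω := by
  rw [sum_eq_card_filter_of_zero_or_one hX]
  refine Nat.cast_le.2 <| csSup_le' fun _ ⟨s, hs, hX, _⟩ => hs ▸ card_le_card fun k hk => ?_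
  simpa using hX k hk

lemma sq_sum_le_activeIndepNum_mul [DecidableRel G.Adj] {ω : Ω}
    (hX : ∀ k, X k ω = 0 ∨ X k ω = 1) :
    (∑ k, X k ω) ^ 2 ≤ activeIndepNum G X ω *
      (∑ k, X k ω + ∑ k₁, ∑ k₂ ∈ univ.filter (G.Adj k₁), X k₁ ω * X k₂ ω) := by
  classical
  obtain ⟨t, htA, ht, hbound⟩ := G.exists_isIndepSet_subset_caroWeiBound_le {k | X k ω = 1}
  have htK : (#t : ℝ) ≤ activeIndepNum G X ω :=
    Nat.cast_le.2 <| card_le_activeIndepNum G X (fun k hk => by simpa using htA hk) ht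
  rw [sum_eq_card_filter_of_zero_or_one hX, sum_adj_mul_eq_of_zero_or_one G hX]
  refine (G.sq_card_le_caroWeiBound_mul _).trans ?_
  gcongr
  exact hbound.trans htK

lemma measurable_activeIndepNum [MeasurableSpace Ω] (hX : ∀ k, Measurable (X k)) :
    Measurable fun ω => (activeIndepNum G X ω : ℝ) := by
  have hactive : Measurable fun ω k => X k ω = 1 := measurable_pi_lambda _ fun k =>
    measurableSet_setOfPred.1 (hX k (measurableSet_singleton 1))
  -- `activeIndepNum G X ω` only depends on the finitely many possible activity patterns
  exact (measurable_of_countable fun p : S → Prop => ((sSup {n | ∃ s : Finset S, #s = n ∧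
    (∀ k ∈ s, p k) ∧ (↑s : Set S).Pairwise fun k₁ k₂ => ¬ G.Adj k₁ k₂} : ℕ) : ℝ)).comp hactive

lemma integrable_activeIndepNum [MeasurableSpace Ω] {μ : Measure Ω} [IsFiniteMeasure μ]
    (hX : ∀ k, Measurable (X k)) : Integrable (fun ω => (activeIndepNum G X ω : ℝ)) μ :=
  .of_bound (measurable_activeIndepNum G X hX).aestronglyMeasurable (Fintype.card S) <|
    ae_of_all _ fun ω => by simpa using activeIndepNum_le_card G X ω

end ActiveIndepNum

lemma integrable_of_zero_or_one {α : Type*} [MeasurableSpace α] {μ : Measure α}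
    [IsFiniteMeasure μ] {f : α → ℝ} (hf : Measurable f) (h01 : ∀ x, f x = 0 ∨ f x = 1) :
    Integrable f μ :=
  .of_bound hf.aestronglyMeasurable 1 <| ae_of_all _ fun x => by
    rcases h01 x with h | h <;> simp [h]

lemma sq_integral_le_integral_mul_integral_of_sq_le_mul {α : Type*} [MeasurableSpace α]
    {μ : Measure α} {a b c : α → ℝ} (ha : Integrable a μ) (hb : Integrable b μ) (hc : Integrable c μ)
    (hb0 : 0 ≤ᵐ[μ] b) (hc0 : 0 ≤ᵐ[μ] c) (habc : ∀ᵐ x ∂μ, a x ^ 2 ≤ b x * c x) :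
    (∫ x, a x ∂μ) ^ 2 ≤ (∫ x, b x ∂μ) * ∫ x, c x ∂μ := by
  -- the quadratic `t ↦ ∫ (b t² - 2 a t + c)` is nonnegative, so its discriminant is not positive
  have hquad : ∀ t : ℝ, 0 ≤ (∫ x, b x ∂μ) * (t * t) + (-2 * ∫ x, a x ∂μ) * t + ∫ x, c x ∂μ := by
    intro t
    have hint : ∫ x, (b x * (t * t) + -2 * a x * t + c x) ∂μ
        = (∫ x, b x ∂μ) * (t * t) + (-2 * ∫ x, a x ∂μ) * t + ∫ x, c x ∂μ := by
      rw [integral_add (f := fun x => b x * (t * t) + -2 * a x * t)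
          ((hb.mul_const _).add ((ha.const_mul _).mul_const _)) hc,
        integral_add (hb.mul_const _) ((ha.const_mul _).mul_const _),
        integral_mul_const, integral_mul_const, integral_const_mul]
    rw [← hint]
    refine integral_nonneg_of_ae ?_
    filter_upwards [hb0, hc0, habc] with x hbx hcx hx
    rcases (show (0 : ℝ) ≤ b x from hbx).eq_or_lt with hb' | hb'
    · have : a x = 0 := by nlinarith
      simpa [← hb', this] using hcx
    · refine (mul_nonneg_iff_of_pos_left hb').1 ?_
      nlinarith [sq_nonneg (b x * t - a x)]
  have := discrim_le_zero hquad
  rw [discrim] at this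
  linarith

/-- for 0/1-valued activations `X` on a conflict graph `G`, with
`K` the independence number of the random induced subgraph on the active set,
`K' = Σ_k X_k`, and `K^p` the expected number of conflicting active pairs,
`E[K']² / (E[K'] + 2 E[K^p]) ≤ E[K] ≤ E[K']`. -/
theorem expected_independence_number_bounds
    {S Ω : Type*} [Fintype S] [MeasurableSpace Ω]
    (μ : Measure Ω) [IsProbabilityMeasure μ]
    (G : SimpleGraph S) [DecidableRel G.Adj]
    (X : S → Ω → ℝ) (hX_meas : ∀ k, Measurable (X k))
    (hX01 : ∀ k ω, X k ω = 0 ∨ X k ω = 1)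
    (K : Ω → ℕ) (hK : ∀ ω, K ω = activeIndepNum G X ω)
    (K' : Ω → ℝ) (hK' : ∀ ω, K' ω = ∑ k, X k ω)
    (Kp : ℝ)
    (hKp : Kp = (1/2) * ∑ k₁, ∑ k₂ ∈ Finset.univ.filter (fun k₂ => G.Adj k₁ k₂),
      ∫ ω, X k₁ ω * X k₂ ω ∂μ) :
    (∫ ω, K' ω ∂μ) ^ 2 / ((∫ ω, K' ω ∂μ) + 2 * Kp) ≤ ∫ ω, (K ω : ℝ) ∂μ ∧
      ∫ ω, (K ω : ℝ) ∂μ ≤ ∫ ω, K' ω ∂μ := by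
  obtain rfl : K = activeIndepNum G X := funext hK
  obtain rfl : K' = fun ω => ∑ k, X k ω := funext hK'
  set P : Ω → ℝ := fun ω => ∑ k₁, ∑ k₂ ∈ univ.filter (G.Adj k₁), X k₁ ω * X k₂ ω
  have hXX_int : ∀ k₁ k₂, Integrable (fun ω => X k₁ ω * X k₂ ω) μ := fun k₁ k₂ =>
    integrable_of_zero_or_one ((hX_meas k₁).mul (hX_meas k₂)) fun ω => by
      rcases hX01 k₁ ω with h | h <;> simp [h, hX01 k₂ ω]
  have hK'_int : Integrable (fun ω => ∑ k, X k ω) μ :=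
    integrable_finsetSum _ fun k _ => integrable_of_zero_or_one (hX_meas k) (hX01 k)
  have hP_int : Integrable P μ :=
    integrable_finsetSum _ fun k₁ _ => integrable_finsetSum _ fun k₂ _ => hXX_int k₁ k₂
  have hK_int : Integrable (fun ω => (activeIndepNum G X ω : ℝ)) μ :=
    integrable_activeIndepNum G X hX_meas
  have hK'P_nonneg : ∀ ω, 0 ≤ ∑ k, X k ω + P ω := fun ω => by
    simp only [P]
    rw [sum_eq_card_filter_of_zero_or_one (hX01 · ω), sum_adj_mul_eq_of_zero_or_one G (hX01 · ω)]
    exact add_nonneg (Nat.cast_nonneg _) (sum_nonneg fun _ _ => Nat.cast_nonneg _)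
  have hden : ∫ ω, (∑ k, X k ω + P ω) ∂μ = ∫ ω, ∑ k, X k ω ∂μ + 2 * Kp := by
    rw [integral_add hK'_int hP_int, hKp,
      integral_finsetSum _ fun k₁ _ => integrable_finsetSum _ fun k₂ _ => hXX_int k₁ k₂]
    simp_rw [integral_finsetSum _ fun k₂ _ => hXX_int _ k₂]
    ring
  have hCS := sq_integral_le_integral_mul_integral_of_sq_le_mul (c := fun ω => ∑ k, X k ω + P ω)
    hK'_int hK_int (hK'_int.add hP_int) (ae_of_all _ fun _ => Nat.cast_nonneg _)
    (ae_of_all _ hK'P_nonneg) (ae_of_all _ fun ω => sq_sum_le_activeIndepNum_mul G X (hX01 · ω))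
  refine ⟨div_le_of_le_mul₀ (hden ▸ integral_nonneg hK'P_nonneg)
    (integral_nonneg fun _ => Nat.cast_nonneg _) (hden ▸ hCS),
    integral_mono hK_int hK'_int fun ω => activeIndepNum_le_sum G X (hX01 · ω)⟩
end

section
/- (Summation of combinatorial numbers) Let p₁, p₂, p₃ > 0, α ∈ (0,1), and M, N, r, c ∈ ℕ. Then Σ over (r', c') with 0 ≤ r' ≤ r−1, 0 ≤ c' ≤ c, (r',c') ≠ (0,0) of C(M,r') C(r,r') C(N,c') C(c,c') p₁^{r'} p₂^{(r+1)c'} p₃^{r'(c−c')} is at most [I₀(2√(M r p₁ p₃^c)) − 1] + [I₀(2√(N c p₂^{r+1})) − 1] + [I₀(2√(M r p₁ p₃^{αc})) − 1]·[I₀(2√(N c p₂^{r+1} p₃^{α(1−r)})) − 1], where I₀ is the modified Bessel function of the first kind of order zero. -/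
/-- The modified Bessel function of the first kind, order zero. -/
noncomputable def besselI0 (x : ℝ) : ℝ := ∑' k : ℕ, (x / 2) ^ (2 * k) / (Nat.factorial k) ^ 2

lemma summable_aux (x : ℝ) (hx : 0 ≤ x) :
    Summable (fun k : ℕ => x ^ k / (Nat.factorial k : ℝ) ^ 2) := by
  apply Summable.of_nonneg_of_le (fun k => by positivity)
    (fun k => ?_) (Real.summable_pow_div_factorial x)
  have hfk : (1:ℝ) ≤ k.factorial := by exact_mod_cast k.factorial_pos
  gcongr
  nlinarith

lemma besselI0_sqrt (x : ℝ) (hx : 0 ≤ x) :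
    besselI0 (2 * Real.sqrt x) = ∑' k : ℕ, x ^ k / (Nat.factorial k : ℝ) ^ 2 := by
  unfold besselI0
  apply tsum_congr
  intro k
  have h2 : 2 * Real.sqrt x / 2 = Real.sqrt x := by ring
  rw [h2, pow_mul, Real.sq_sqrt hx]

lemma sum_le_bessel (x : ℝ) (hx : 0 ≤ x) (s : Finset ℕ) (hs : 0 ∉ s) :
    ∑ k ∈ s, x ^ k / (Nat.factorial k : ℝ) ^ 2 ≤ besselI0 (2 * Real.sqrt x) - 1 := by
  rw [besselI0_sqrt x hx]
  have h := Summable.sum_le_tsum (insert 0 s)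
    (fun k _ => by positivity : ∀ k ∉ insert 0 s, 0 ≤ x ^ k / (Nat.factorial k : ℝ) ^ 2)
    (summable_aux x hx)
  rw [Finset.sum_insert hs] at h
  simp only [pow_zero, Nat.factorial_zero, Nat.cast_one, one_pow, div_one] at h
  linarith

lemma bessel_sub_one_nonneg (x : ℝ) (hx : 0 ≤ x) : 0 ≤ besselI0 (2 * Real.sqrt x) - 1 := by
  have := sum_le_bessel x hx ∅ (by simp)
  simpa using this

lemma choose2_bound (m n k : ℕ) (u : ℝ) (hu : 0 ≤ u) :
    (m.choose k : ℝ) * (n.choose k) * u ^ k ≤ ((m:ℝ) * n * u) ^ k / (Nat.factorial k : ℝ) ^ 2 := by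
  have h1 : (m.choose k : ℝ) ≤ (m:ℝ) ^ k / k.factorial := by
    simpa using Nat.choose_le_pow_div (α := ℝ) k m
  have h2 : (n.choose k : ℝ) ≤ (n:ℝ) ^ k / k.factorial := by
    simpa using Nat.choose_le_pow_div (α := ℝ) k n
  calc (m.choose k : ℝ) * (n.choose k) * u ^ k
      ≤ ((m:ℝ) ^ k / k.factorial) * ((n:ℝ) ^ k / k.factorial) * u ^ k := by
        apply mul_le_mul_of_nonneg_right _ (by positivity)
        exact mul_le_mul h1 h2 (by positivity) (by positivity)
    _ = ((m:ℝ) * n * u) ^ k / (Nat.factorial k : ℝ) ^ 2 := by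
        rw [mul_pow, mul_pow]
        ring

/-- Summation of combinatorial numbers: the sum over
`0 ≤ r' ≤ r−1`, `0 ≤ c' ≤ c`, `(r',c') ≠ (0,0)` of
`C(M,r') C(r,r') C(N,c') C(c,c') p₁^{r'} p₂^{(r+1)c'} p₃^{r'(c−c')}` is at most
`[I₀(2√(M r p₁ p₃^c)) − 1] + [I₀(2√(N c p₂^{r+1})) − 1]
 + [I₀(2√(M r p₁ p₃^{αc})) − 1]·[I₀(2√(N c p₂^{r+1} p₃^{α(1−r)})) − 1]`. -/
theorem sum_combinatorial_le_besselI0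
    (M N r c : ℕ) (p₁ p₂ p₃ α : ℝ)
    (hp₁ : 0 < p₁) (hp₂ : 0 < p₂) (hp₃ : 0 < p₃) (hp₃1 : p₃ ≤ 1)
    (hα0 : 0 < α) (hα1 : α < 1) :
    ∑ rc ∈ (Finset.range r ×ˢ Finset.range (c + 1)) \ {(0, 0)},
      (M.choose rc.1 : ℝ) * (r.choose rc.1) * (N.choose rc.2) * (c.choose rc.2) *
        p₁ ^ rc.1 * p₂ ^ ((r + 1) * rc.2) * p₃ ^ (rc.1 * (c - rc.2)) ≤
      (besselI0 (2 * Real.sqrt (M * r * p₁ * p₃ ^ c)) - 1)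
      + (besselI0 (2 * Real.sqrt (N * c * p₂ ^ (r + 1))) - 1)
      + (besselI0 (2 * Real.sqrt (M * r * p₁ * p₃ ^ (α * c))) - 1)
        * (besselI0 (2 * Real.sqrt (N * c * p₂ ^ (r + 1) * p₃ ^ (α * (1 - (r : ℝ))))) - 1) := by
  set f : ℕ × ℕ → ℝ := fun rc =>
      (M.choose rc.1 : ℝ) * (r.choose rc.1) * (N.choose rc.2) * (c.choose rc.2) *
        p₁ ^ rc.1 * p₂ ^ ((r + 1) * rc.2) * p₃ ^ (rc.1 * (c - rc.2)) with hf
  set X₁ : ℝ := (M : ℝ) * r * p₁ * p₃ ^ c with hX₁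
  set X₂ : ℝ := (N : ℝ) * c * p₂ ^ (r + 1) with hX₂
  set Y₁ : ℝ := (M : ℝ) * r * p₁ * p₃ ^ (α * c) with hY₁
  set Y₂ : ℝ := (N : ℝ) * c * p₂ ^ (r + 1) * p₃ ^ (α * (1 - (r : ℝ))) with hY₂
  rcases Nat.eq_zero_or_pos r with hr | hr
  · have h1 := bessel_sub_one_nonneg X₁ (by positivity)
    have h2 := bessel_sub_one_nonneg X₂ (by positivity)
    have h3 := bessel_sub_one_nonneg Y₁ (by positivity)
    have h4 := bessel_sub_one_nonneg Y₂ (by positivity)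
    subst hr
    rw [hX₁, hX₂, hY₁, hY₂] at *
    simp only [Finset.range_zero, Finset.empty_product, Finset.empty_sdiff, Finset.sum_empty]
    push_cast at *
    nlinarith
  have hX₁0 : 0 ≤ X₁ := by positivity
  have hX₂0 : 0 ≤ X₂ := by positivity
  have hY₁0 : 0 ≤ Y₁ := by positivity
  have hY₂0 : 0 ≤ Y₂ := by positivity
  have hsplit : (Finset.range r ×ˢ Finset.range (c + 1)) \ {((0:ℕ), (0:ℕ))}
      = (((Finset.range r).erase 0) ×ˢ {(0:ℕ)})
      ∪ (({(0:ℕ)} ×ˢ ((Finset.range (c+1)).erase 0))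
      ∪ (((Finset.range r).erase 0) ×ˢ ((Finset.range (c+1)).erase 0))) := by
    ext ⟨a, b⟩
    simp only [Finset.mem_sdiff, Finset.mem_product, Finset.mem_range,
      Finset.mem_singleton, Finset.mem_union, Finset.mem_erase, Prod.mk.injEq, ne_eq, not_and]
    omega
  have hdisj1 : Disjoint (((Finset.range r).erase 0) ×ˢ ({(0:ℕ)} : Finset ℕ))
      (({(0:ℕ)} ×ˢ ((Finset.range (c+1)).erase 0))
      ∪ (((Finset.range r).erase 0) ×ˢ ((Finset.range (c+1)).erase 0))) := by
    rw [Finset.disjoint_left]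
    rintro ⟨a, b⟩ h1 h2
    simp only [Finset.mem_product, Finset.mem_singleton, Finset.mem_union, Finset.mem_erase,
      Finset.mem_range, ne_eq] at h1 h2
    omega
  have hdisj2 : Disjoint (({(0:ℕ)} : Finset ℕ) ×ˢ ((Finset.range (c+1)).erase 0))
      (((Finset.range r).erase 0) ×ˢ ((Finset.range (c+1)).erase 0)) := by
    rw [Finset.disjoint_left]
    rintro ⟨a, b⟩ h1 h2
    simp only [Finset.mem_product, Finset.mem_singleton, Finset.mem_erase,
      Finset.mem_range, ne_eq] at h1 h2
    omega
  rw [hsplit, Finset.sum_union hdisj1, Finset.sum_union hdisj2]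
  have key1 : ∑ rc ∈ ((Finset.range r).erase 0) ×ˢ ({(0:ℕ)} : Finset ℕ), f rc
      ≤ besselI0 (2 * Real.sqrt X₁) - 1 := by
    rw [Finset.sum_product]
    simp only [Finset.sum_singleton]
    refine le_trans (Finset.sum_le_sum (fun k _ => ?_))
      (sum_le_bessel X₁ hX₁0 _ (by simp))
    show f (k, 0) ≤ X₁ ^ k / (Nat.factorial k : ℝ) ^ 2
    have hb := choose2_bound M r k (p₁ * p₃ ^ c) (by positivity)
    have hterm : f (k, 0) = (M.choose k : ℝ) * (r.choose k) * (p₁ * p₃ ^ c) ^ k := by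
      simp only [hf, Nat.choose_zero_right, Nat.cast_one, mul_one, Nat.sub_zero,
        Nat.mul_zero, pow_zero]
      rw [mul_pow, ← pow_mul, mul_comm c k]
      ring
    have hXeq : (M:ℝ) * r * (p₁ * p₃ ^ c) = X₁ := by rw [hX₁]; ring
    rw [hterm, ← hXeq]
    exact hb
  have key2 : ∑ rc ∈ ({(0:ℕ)} : Finset ℕ) ×ˢ ((Finset.range (c+1)).erase 0), f rc
      ≤ besselI0 (2 * Real.sqrt X₂) - 1 := by
    rw [Finset.sum_product, Finset.sum_singleton]
    refine le_trans (Finset.sum_le_sum (fun k _ => ?_))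
      (sum_le_bessel X₂ hX₂0 _ (by simp))
    show f (0, k) ≤ X₂ ^ k / (Nat.factorial k : ℝ) ^ 2
    have hb := choose2_bound N c k (p₂ ^ (r + 1)) (by positivity)
    have hterm : f (0, k) = (N.choose k : ℝ) * (c.choose k) * (p₂ ^ (r + 1)) ^ k := by
      simp only [hf, Nat.choose_zero_right, Nat.cast_one, one_mul,
        Nat.zero_mul, pow_zero, mul_one]
      rw [← pow_mul]
    rw [hterm]
    exact hb
  have key3 : ∑ rc ∈ ((Finset.range r).erase 0) ×ˢ ((Finset.range (c+1)).erase 0), f rc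
      ≤ (besselI0 (2 * Real.sqrt Y₁) - 1) * (besselI0 (2 * Real.sqrt Y₂) - 1) := by
    have step1 : ∑ rc ∈ ((Finset.range r).erase 0) ×ˢ ((Finset.range (c+1)).erase 0), f rc
        ≤ ∑ rc ∈ ((Finset.range r).erase 0) ×ˢ ((Finset.range (c+1)).erase 0),
            (Y₁ ^ rc.1 / (Nat.factorial rc.1 : ℝ) ^ 2) *
            (Y₂ ^ rc.2 / (Nat.factorial rc.2 : ℝ) ^ 2) := by
      apply Finset.sum_le_sum
      rintro ⟨a, b⟩ hab
      simp only [Finset.mem_product, Finset.mem_erase, Finset.mem_range, ne_eq] at hab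
      obtain ⟨⟨ha0, har⟩, hb0, hbc⟩ := hab
      have hbc' : b ≤ c := by omega
      have q₁ : ℝ := p₃ ^ (α * (c:ℝ))
      have hq₁0 : (0:ℝ) < p₃ ^ (α * (c:ℝ)) := Real.rpow_pos_of_pos hp₃ _
      have hq₂0 : (0:ℝ) < p₃ ^ (α * (1 - (r:ℝ))) := Real.rpow_pos_of_pos hp₃ _
      -- exponent inequality
      have hexp : p₃ ^ (a * (c - b)) ≤ (p₃ ^ (α * (c:ℝ))) ^ a * (p₃ ^ (α * (1 - (r:ℝ)))) ^ b := by
        have e1 : (p₃ ^ (α * (c:ℝ))) ^ a = p₃ ^ (α * (c:ℝ) * a) := by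
          rw [← Real.rpow_natCast (p₃ ^ (α * (c:ℝ))) a, ← Real.rpow_mul hp₃.le]
        have e2 : (p₃ ^ (α * (1 - (r:ℝ)))) ^ b = p₃ ^ (α * (1 - (r:ℝ)) * b) := by
          rw [← Real.rpow_natCast (p₃ ^ (α * (1 - (r:ℝ)))) b, ← Real.rpow_mul hp₃.le]
        have e3 : p₃ ^ (a * (c - b)) = p₃ ^ ((a * (c - b) : ℕ) : ℝ) := by
          rw [Real.rpow_natCast]
        rw [e1, e2, e3, ← Real.rpow_add hp₃]
        apply Real.rpow_le_rpow_of_exponent_ge hp₃ hp₃1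
        have hcb : ((a * (c - b) : ℕ) : ℝ) = (a:ℝ) * ((c:ℝ) - b) := by
          push_cast [hbc']
          ring
        rw [hcb]
        have har' : (a:ℝ) + 1 ≤ (r:ℝ) := by exact_mod_cast har
        have hbcr : (b:ℝ) ≤ (c:ℝ) := by exact_mod_cast hbc'
        have ha1 : (1:ℝ) ≤ (a:ℝ) := by exact_mod_cast Nat.one_le_iff_ne_zero.mpr ha0
        have hb0' : (0:ℝ) ≤ (b:ℝ) := by positivity
        nlinarith [mul_nonneg (mul_nonneg (sub_nonneg.mpr hα1.le)
            (by linarith : (0:ℝ) ≤ (a:ℝ))) (sub_nonneg.mpr hbcr),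
          mul_nonneg (mul_nonneg hα0.le (by linarith : (0:ℝ) ≤ (r:ℝ) - 1 - a)) hb0']
      have hleft : (M.choose a : ℝ) * (r.choose a) * p₁ ^ a * (p₃ ^ (α * (c:ℝ))) ^ a
          ≤ Y₁ ^ a / (Nat.factorial a : ℝ) ^ 2 := by
        have hb := choose2_bound M r a (p₁ * p₃ ^ (α * (c:ℝ))) (by positivity)
        have hYeq : (M:ℝ) * r * (p₁ * p₃ ^ (α * (c:ℝ))) = Y₁ := by rw [hY₁]; ring
        rw [← hYeq]
        calc (M.choose a : ℝ) * (r.choose a) * p₁ ^ a * (p₃ ^ (α * (c:ℝ))) ^ a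
            = (M.choose a : ℝ) * (r.choose a) * (p₁ * p₃ ^ (α * (c:ℝ))) ^ a := by
              rw [mul_pow]; ring
          _ ≤ _ := hb
      have hright : (N.choose b : ℝ) * (c.choose b) * p₂ ^ ((r + 1) * b) *
            (p₃ ^ (α * (1 - (r:ℝ)))) ^ b
          ≤ Y₂ ^ b / (Nat.factorial b : ℝ) ^ 2 := by
        have hb := choose2_bound N c b (p₂ ^ (r + 1) * p₃ ^ (α * (1 - (r:ℝ)))) (by positivity)
        have hYeq : (N:ℝ) * c * (p₂ ^ (r + 1) * p₃ ^ (α * (1 - (r:ℝ)))) = Y₂ := by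
          rw [hY₂]; ring
        rw [← hYeq]
        calc (N.choose b : ℝ) * (c.choose b) * p₂ ^ ((r + 1) * b) * (p₃ ^ (α * (1 - (r:ℝ)))) ^ b
            = (N.choose b : ℝ) * (c.choose b) *
              (p₂ ^ (r + 1) * p₃ ^ (α * (1 - (r:ℝ)))) ^ b := by
              rw [mul_pow, ← pow_mul]; ring
          _ ≤ _ := hb
      calc f (a, b)
          = ((M.choose a : ℝ) * (r.choose a) * (N.choose b) * (c.choose b) *
            p₁ ^ a * p₂ ^ ((r + 1) * b)) * p₃ ^ (a * (c - b)) := by rw [hf]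
        _ ≤ ((M.choose a : ℝ) * (r.choose a) * (N.choose b) * (c.choose b) *
            p₁ ^ a * p₂ ^ ((r + 1) * b)) *
            ((p₃ ^ (α * (c:ℝ))) ^ a * (p₃ ^ (α * (1 - (r:ℝ)))) ^ b) := by
            apply mul_le_mul_of_nonneg_left hexp (by positivity)
        _ = ((M.choose a : ℝ) * (r.choose a) * p₁ ^ a * (p₃ ^ (α * (c:ℝ))) ^ a) *
            ((N.choose b : ℝ) * (c.choose b) * p₂ ^ ((r + 1) * b) *
              (p₃ ^ (α * (1 - (r:ℝ)))) ^ b) := by ring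
        _ ≤ (Y₁ ^ a / (Nat.factorial a : ℝ) ^ 2) * (Y₂ ^ b / (Nat.factorial b : ℝ) ^ 2) :=
            mul_le_mul hleft hright (by positivity) (by positivity)
    have step2 : ∑ rc ∈ ((Finset.range r).erase 0) ×ˢ ((Finset.range (c+1)).erase 0),
          (Y₁ ^ rc.1 / (Nat.factorial rc.1 : ℝ) ^ 2) * (Y₂ ^ rc.2 / (Nat.factorial rc.2 : ℝ) ^ 2)
        = (∑ k ∈ (Finset.range r).erase 0, Y₁ ^ k / (Nat.factorial k : ℝ) ^ 2) *
          (∑ k ∈ (Finset.range (c+1)).erase 0, Y₂ ^ k / (Nat.factorial k : ℝ) ^ 2) := by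
      rw [Finset.sum_mul_sum, Finset.sum_product]
    refine le_trans step1 (le_trans (le_of_eq step2) ?_)
    exact mul_le_mul (sum_le_bessel Y₁ hY₁0 _ (by simp)) (sum_le_bessel Y₂ hY₂0 _ (by simp))
      (Finset.sum_nonneg fun k _ => by positivity) (bessel_sub_one_nonneg Y₁ hY₁0)
  linarith
end
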